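/- Let n ≥ 1, let λ_1 ≥ λ_2 ≥ … ≥ λ_n > 0, let 1 ≤ q ≤ ∞, and for an invertible linear map T of ℝ^n define Γ(T) = max_{‖x‖_q = 1} ‖x‖_{T B_1^n}, the reciprocal of the largest ε with ε·B_q^n ⊆ T B_1^n. Then the supremum of Γ(O·D·U) over all orthogonal matrices O, U (where D = diag(λ_1, …, λ_n)) — i.e., over all T with singular values (λ_i) — equals λ_n^{−1}·n^{1−1/q} if q ≥ 2, and equals λ_n^{−1}·n^{1/2} if 1 ≤ q < 2. -/

import Mathlib

open scoped BigOperators ENNReal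

/-- The `ℓ_q^n` norm on `ℝ^n` (`1 ≤ q ≤ ∞`). -/
noncomputable def pnorm (q : ℝ≥0∞) {n : ℕ} (x : EuclideanSpace ℝ (Fin n)) : ℝ :=
  if q = ∞ then ⨆ i, |x i| else (∑ i, |x i| ^ q.toReal) ^ q.toReal⁻¹

/-- The unit ball of `ℓ_q^n` (`1 ≤ q ≤ ∞`), as a subset of `ℝ^n`. -/
noncomputable def pball (q : ℝ≥0∞) (n : ℕ) : Set (EuclideanSpace ℝ (Fin n)) :=
  {x | pnorm q x ≤ 1}

/-- The diagonal map `x ↦ (l_i·x_i)_i` on `ℝ^n`. -/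
noncomputable def diagMap (n : ℕ) (l : Fin n → ℝ) :
    EuclideanSpace ℝ (Fin n) →ₗ[ℝ] EuclideanSpace ℝ (Fin n) where
  toFun x := WithLp.toLp 2 (fun i => l i * x i)
  map_add' x y := by ext i; simp [mul_add]
  map_smul' c x := by ext i; simp <;> ring

/-- `Γ(T) = max_{‖x‖_q = 1} ‖x‖_{T B_1^n}`, the reciprocal of the largest `ε` with
`ε·B_q^n ⊆ T B_1^n`; here `‖·‖_{T B_1^n}` is the Minkowski gauge of `T B_1^n`. -/
noncomputable def GammaT (q : ℝ≥0∞) (n : ℕ)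
    (T : EuclideanSpace ℝ (Fin n) → EuclideanSpace ℝ (Fin n)) : ℝ :=
  sSup {r : ℝ | ∃ x, pnorm q x = 1 ∧ r = gauge (T '' pball 1 n) x}

/-!
Writing `T = O D U`, the gauge of `T B_1^n` is `x ↦ ‖T⁻¹ x‖₁`, so `Γ(T)` is the norm of
`T⁻¹ = U⁻¹ D⁻¹ O⁻¹ : ℓ_q^n → ℓ_1^n`. Route it through `ℓ_2^n`: `‖x‖₂ ≤ c_q ‖x‖_q` with
`c_q = n^{1/2 - 1/q}` for `q ≥ 2` (Hölder) and `c_q = 1` for `q ≤ 2`; the orthogonal factors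
preserve `‖·‖₂`; `‖D⁻¹ y‖₂ ≤ λ_n⁻¹ ‖y‖₂`; and `‖z‖₁ ≤ √n ‖z‖₂`. This gives
`Γ(O D U) ≤ λ_n⁻¹ √n c_q`. The three estimates are equalities simultaneously when `O` maps
`c_q e_n` to an extremal `x` of the first one and `U⁻¹` maps `e_n` to the flat unit vector
`n^{-1/2} (1, …, 1)`; reflections provide such `O` and `U`.
-/

open Set

theorem gauge_image_linearEquiv {E F : Type*} [AddCommGroup E] [Module ℝ E] [AddCommGroup F]
    [Module ℝ F] (e : E ≃ₗ[ℝ] F) (s : Set E) (x : E) :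
    gauge (e '' s) (e x) = gauge s x := by
  simp only [gauge_def, ← image_smul_set, e.injective.mem_set_image]

theorem exists_linearIsometryEquiv_apply_eq {F : Type*} [NormedAddCommGroup F]
    [InnerProductSpace ℝ F] {v w : F} (h : ‖v‖ = ‖w‖) : ∃ O : F ≃ₗᵢ[ℝ] F, O v = w :=
  ⟨_, Submodule.reflection_sub h⟩

section Lq

variable {n : ℕ} {q : ℝ≥0∞}

theorem pnorm_one_eq_sum (x : EuclideanSpace ℝ (Fin n)) : pnorm 1 x = ∑ i, |x i| := by
  simp [pnorm]

theorem pnorm_one_smul (c : ℝ) (x : EuclideanSpace ℝ (Fin n)) :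
    pnorm 1 (c • x) = |c| * pnorm 1 x := by
  simp [pnorm_one_eq_sum, Finset.mul_sum, abs_mul]

theorem pnorm_one_le_sqrt_mul_norm (x : EuclideanSpace ℝ (Fin n)) : pnorm 1 x ≤ √n * ‖x‖ := by
  refine le_of_pow_le_pow_left₀ two_ne_zero (by positivity) ?_
  calc pnorm 1 x ^ 2 ≤ n * ∑ i, |x i| ^ 2 := by
        simpa [pnorm_one_eq_sum] using
          sq_sum_le_card_mul_sum_sq (s := Finset.univ) (f := fun i => |x i|)
    _ = (√n * ‖x‖) ^ 2 := by simp [mul_pow, EuclideanSpace.real_norm_sq_eq]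

noncomputable def euclideanToL1 (n : ℕ) :
    EuclideanSpace ℝ (Fin n) ≃ₗ[ℝ] PiLp 1 (fun _ : Fin n => ℝ) :=
  (WithLp.linearEquiv 2 ℝ (Fin n → ℝ)).trans (WithLp.linearEquiv 1 ℝ (Fin n → ℝ)).symm

theorem norm_euclideanToL1 (x : EuclideanSpace ℝ (Fin n)) :
    ‖euclideanToL1 n x‖ = pnorm 1 x := by
  simp [PiLp.norm_eq_of_L1, pnorm_one_eq_sum, euclideanToL1]

theorem gauge_pball_one (x : EuclideanSpace ℝ (Fin n)) : gauge (pball 1 n) x = pnorm 1 x := by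
  have hball : pball 1 n = (euclideanToL1 n).symm '' Metric.closedBall 0 1 := by
    rw [LinearEquiv.image_symm_eq_preimage]
    ext y
    simp [pball, norm_euclideanToL1]
  rw [hball, ← (euclideanToL1 n).symm_apply_apply x, gauge_image_linearEquiv,
    gauge_closedBall zero_le_one, div_one, norm_euclideanToL1, LinearEquiv.symm_apply_apply]

theorem ENNReal.one_le_toReal_of_one_le (hq : 1 ≤ q) (hq' : q ≠ ∞) : 1 ≤ q.toReal := by
  simpa using ENNReal.toReal_mono hq' hq

theorem sum_abs_rpow_eq_one_of_pnorm_eq_one (hq : 1 ≤ q) (hq' : q ≠ ∞)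
    {x : EuclideanSpace ℝ (Fin n)} (hx : pnorm q x = 1) : ∑ i, |x i| ^ q.toReal = 1 := by
  have ht : q.toReal ≠ 0 := (zero_lt_one.trans_le (ENNReal.one_le_toReal_of_one_le hq hq')).ne'
  simp only [pnorm, if_neg hq'] at hx
  rw [← Real.rpow_inv_rpow (Finset.sum_nonneg fun i _ => by positivity) ht, hx, Real.one_rpow]

theorem abs_le_one_of_pnorm_eq_one (hq : 1 ≤ q) {x : EuclideanSpace ℝ (Fin n)}
    (hx : pnorm q x = 1) (i : Fin n) : |x i| ≤ 1 := by
  by_cases hq' : q = ∞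
  · simp only [pnorm, if_pos hq'] at hx
    exact hx ▸ le_ciSup (f := fun j => |x j|) (Finite.bddAbove (finite_range _)) i
  · have hi : |x i| ^ q.toReal ≤ 1 := sum_abs_rpow_eq_one_of_pnorm_eq_one hq hq' hx ▸
      Finset.single_le_sum (f := fun j => |x j| ^ q.toReal) (fun j _ => by positivity)
        (Finset.mem_univ i)
    by_contra! h
    exact hi.not_gt (Real.one_lt_rpow h (by linarith [ENNReal.one_le_toReal_of_one_le hq hq']))

theorem norm_le_one_of_pnorm_eq_one (hq : 1 ≤ q) (hq2 : q ≤ 2) {x : EuclideanSpace ℝ (Fin n)}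
    (hx : pnorm q x = 1) : ‖x‖ ≤ 1 := by
  have hq' : q ≠ ∞ := ne_top_of_le_ne_top ENNReal.ofNat_ne_top hq2
  have ht2 : q.toReal ≤ 2 := by simpa using ENNReal.toReal_mono ENNReal.ofNat_ne_top hq2
  refine le_of_pow_le_pow_left₀ two_ne_zero zero_le_one ?_
  rw [EuclideanSpace.real_norm_sq_eq, one_pow, ← sum_abs_rpow_eq_one_of_pnorm_eq_one hq hq' hx]
  refine Finset.sum_le_sum fun i _ => ?_
  rw [← sq_abs, ← Real.rpow_two]
  exact Real.rpow_le_rpow_of_exponent_ge' (abs_nonneg _) (abs_le_one_of_pnorm_eq_one hq hx i)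
    (by linarith [ENNReal.one_le_toReal_of_one_le hq hq']) ht2

/-- Hölder's inequality with exponent `q/2`, applied to `(x_i²)_i` and the constant weights. -/
theorem norm_le_rpow_of_pnorm_eq_one (hq2 : 2 ≤ q) {x : EuclideanSpace ℝ (Fin n)}
    (hx : pnorm q x = 1) : ‖x‖ ≤ (n : ℝ) ^ ((2 : ℝ)⁻¹ - q.toReal⁻¹) := by
  have hq : 1 ≤ q := one_le_two.trans hq2
  refine le_of_pow_le_pow_left₀ two_ne_zero (by positivity) ?_
  rw [EuclideanSpace.real_norm_sq_eq, ← Real.rpow_two, ← Real.rpow_mul (Nat.cast_nonneg n)]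
  by_cases hq' : q = ∞
  · subst hq'
    calc ∑ i, x i ^ 2 ≤ ∑ _i : Fin n, (1 : ℝ) := Finset.sum_le_sum fun i _ => by
          rw [← sq_abs]; nlinarith [abs_le_one_of_pnorm_eq_one hq hx i, abs_nonneg (x i)]
      _ = _ := by simp
  · have ht2 : 2 ≤ q.toReal := by simpa using ENNReal.toReal_mono hq' hq2
    have h := Real.inner_le_weight_mul_Lp_of_nonneg Finset.univ (p := q.toReal / 2)
      (by linarith) (fun _ => 1) (fun i => x i ^ 2) (fun _ => zero_le_one) (fun i => sq_nonneg _)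
    have hpow : ∀ i, (x i ^ 2) ^ (q.toReal / 2) = |x i| ^ q.toReal := fun i => by
      rw [← sq_abs, ← Real.rpow_two, ← Real.rpow_mul (abs_nonneg _)]
      ring_nf
    simp only [one_mul, hpow, sum_abs_rpow_eq_one_of_pnorm_eq_one hq hq' hx, Real.one_rpow,
      mul_one, Finset.sum_const, Finset.card_univ, Fintype.card_fin, nsmul_eq_mul] at h
    refine h.trans_eq (congrArg _ ?_)
    ring

/-- The norm of the identity map `ℓ_q^n → ℓ_2^n`. -/
noncomputable def normIdLqL2 (q : ℝ≥0∞) (n : ℕ) : ℝ :=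
  if 2 ≤ q then (n : ℝ) ^ ((2 : ℝ)⁻¹ - q.toReal⁻¹) else 1

theorem normIdLqL2_nonneg (q : ℝ≥0∞) (n : ℕ) : 0 ≤ normIdLqL2 q n := by
  unfold normIdLqL2
  split_ifs <;> positivity

theorem norm_le_normIdLqL2 (hq : 1 ≤ q) {x : EuclideanSpace ℝ (Fin n)} (hx : pnorm q x = 1) :
    ‖x‖ ≤ normIdLqL2 q n := by
  unfold normIdLqL2
  split_ifs with hq2
  · exact norm_le_rpow_of_pnorm_eq_one hq2 hx
  · exact norm_le_one_of_pnorm_eq_one hq (not_le.1 hq2).le hx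

theorem norm_toLp_const (a : ℝ) :
    ‖(WithLp.toLp 2 fun _ : Fin n => a : EuclideanSpace ℝ (Fin n))‖ = √n * |a| := by
  simp [EuclideanSpace.norm_eq, Real.sqrt_mul (Nat.cast_nonneg n), Real.sqrt_sq_eq_abs]

theorem pnorm_one_toLp_const (a : ℝ) :
    pnorm 1 (WithLp.toLp 2 fun _ : Fin n => a : EuclideanSpace ℝ (Fin n)) = n * |a| := by
  simp [pnorm_one_eq_sum]

theorem pnorm_toLp_const_rpow (hn : 0 < n) (hq : 1 ≤ q) :
    pnorm q (WithLp.toLp 2 fun _ : Fin n => (n : ℝ) ^ (-q.toReal⁻¹) :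
      EuclideanSpace ℝ (Fin n)) = 1 := by
  have hn' : (0 : ℝ) < n := Nat.cast_pos.2 hn
  have : Nonempty (Fin n) := ⟨⟨0, hn⟩⟩
  by_cases hq' : q = ∞
  · simp [pnorm, hq']
  · have ht : q.toReal ≠ 0 := (zero_lt_one.trans_le (ENNReal.one_le_toReal_of_one_le hq hq')).ne'
    simp [pnorm, hq', abs_of_pos (Real.rpow_pos_of_pos hn' _), ← Real.rpow_mul hn'.le, ht,
      Real.rpow_neg_one, mul_inv_cancel₀ hn'.ne']

theorem pnorm_single_one (hq : 1 ≤ q) (i : Fin n) : pnorm q (EuclideanSpace.single i 1) = 1 := by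
  by_cases hq' : q = ∞
  · have : Nonempty (Fin n) := ⟨i⟩
    simp only [pnorm, if_pos hq']
    refine le_antisymm (ciSup_le fun j => ?_)
      (le_ciSup_of_le (Finite.bddAbove (finite_range _)) i (by simp))
    by_cases hj : j = i <;> simp [hj]
  · have ht : q.toReal ≠ 0 := (zero_lt_one.trans_le (ENNReal.one_le_toReal_of_one_le hq hq')).ne'
    simp [pnorm, hq', apply_ite, Real.zero_rpow ht]

theorem exists_pnorm_eq_one_norm_eq (hn : 0 < n) (hq : 1 ≤ q) :
    ∃ x : EuclideanSpace ℝ (Fin n), pnorm q x = 1 ∧ ‖x‖ = normIdLqL2 q n := by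
  unfold normIdLqL2
  split_ifs with hq2
  · refine ⟨_, pnorm_toLp_const_rpow hn hq, ?_⟩
    rw [norm_toLp_const, abs_of_nonneg (by positivity), Real.sqrt_eq_rpow, ← Real.rpow_add
      (Nat.cast_pos.2 hn), one_div, sub_eq_add_neg]
  · exact ⟨_, pnorm_single_one hq ⟨0, hn⟩, by simp [PiLp.norm_single]⟩

theorem sqrt_mul_normIdLqL2 (q : ℝ≥0∞) (n : ℕ) :
    √n * normIdLqL2 q n = if 2 ≤ q then (n : ℝ) ^ (1 - q.toReal⁻¹) else √n := by
  unfold normIdLqL2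
  split_ifs with hq2
  · have h : (2 : ℝ)⁻¹ + (2⁻¹ - q.toReal⁻¹) ≠ 0 := by
      intro h
      have : q.toReal = 1 := inv_eq_one.1 (by linarith)
      rw [ENNReal.toReal_eq_one_iff] at this
      exact absurd hq2 (by simp [this])
    rw [Real.sqrt_eq_rpow, one_div, ← Real.rpow_add' (Nat.cast_nonneg n) h]
    ring_nf
  · exact mul_one _

end Lq

section Gamma

variable {n : ℕ} {q : ℝ≥0∞}

@[simp]
theorem diagMap_apply (l : Fin n → ℝ) (x : EuclideanSpace ℝ (Fin n)) (i : Fin n) :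
    diagMap n l x i = l i * x i :=
  rfl

theorem norm_diagMap_le {l : Fin n → ℝ} {m : ℝ} (hm : 0 ≤ m) (hl : ∀ i, |l i| ≤ m)
    (x : EuclideanSpace ℝ (Fin n)) : ‖diagMap n l x‖ ≤ m * ‖x‖ := by
  refine le_of_pow_le_pow_left₀ two_ne_zero (by positivity) ?_
  rw [mul_pow, EuclideanSpace.real_norm_sq_eq, EuclideanSpace.real_norm_sq_eq, Finset.mul_sum]
  refine Finset.sum_le_sum fun i _ => ?_
  rw [diagMap_apply, mul_pow, ← sq_abs (l i)]
  gcongr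
  exact hl i

noncomputable def diagEquiv (l : Fin n → ℝ) (hl : ∀ i, l i ≠ 0) :
    EuclideanSpace ℝ (Fin n) ≃ₗ[ℝ] EuclideanSpace ℝ (Fin n) :=
  { diagMap n l with
    invFun := diagMap n l⁻¹
    left_inv := fun x => by ext i; simp [hl i]
    right_inv := fun x => by ext i; simp [hl i] }

theorem gauge_image_pball_one (T : EuclideanSpace ℝ (Fin n) ≃ₗ[ℝ] EuclideanSpace ℝ (Fin n))
    (x : EuclideanSpace ℝ (Fin n)) : gauge (T '' pball 1 n) x = pnorm 1 (T.symm x) := by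
  rw [← gauge_pball_one, ← gauge_image_linearEquiv T _ (T.symm x), T.apply_symm_apply]

theorem GammaT_le {T : EuclideanSpace ℝ (Fin n) ≃ₗ[ℝ] EuclideanSpace ℝ (Fin n)} {B : ℝ}
    (hB : 0 ≤ B) (h : ∀ x, pnorm q x = 1 → pnorm 1 (T.symm x) ≤ B) : GammaT q n T ≤ B :=
  Real.sSup_le (by rintro _ ⟨x, hx, rfl⟩; rw [gauge_image_pball_one]; exact h x hx) hB

theorem GammaT_eq {T : EuclideanSpace ℝ (Fin n) ≃ₗ[ℝ] EuclideanSpace ℝ (Fin n)} {B : ℝ}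
    (h : ∀ x, pnorm q x = 1 → pnorm 1 (T.symm x) ≤ B) {x₀ : EuclideanSpace ℝ (Fin n)}
    (hx₀ : pnorm q x₀ = 1) (hB : pnorm 1 (T.symm x₀) = B) : GammaT q n T = B :=
  IsGreatest.csSup_eq ⟨⟨x₀, hx₀, by rw [gauge_image_pball_one, hB]⟩,
    by rintro _ ⟨x, hx, rfl⟩; rw [gauge_image_pball_one]; exact h x hx⟩

variable (O U : EuclideanSpace ℝ (Fin n) ≃ₗᵢ[ℝ] EuclideanSpace ℝ (Fin n))

noncomputable def svdEquiv (l : Fin n → ℝ) (hl : ∀ i, l i ≠ 0) :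
    EuclideanSpace ℝ (Fin n) ≃ₗ[ℝ] EuclideanSpace ℝ (Fin n) :=
  U.toLinearEquiv.trans ((diagEquiv l hl).trans O.toLinearEquiv)

variable {l : Fin n → ℝ}

theorem svdEquiv_symm_apply (hl : ∀ i, l i ≠ 0) (x : EuclideanSpace ℝ (Fin n)) :
    (svdEquiv O U l hl).symm x = U.symm (diagMap n l⁻¹ (O.symm x)) :=
  rfl

theorem pnorm_one_svdEquiv_symm_le (hq : 1 ≤ q) (hpos : ∀ j, 0 < l j) {i : Fin n}
    (hmin : ∀ j, l i ≤ l j) {x : EuclideanSpace ℝ (Fin n)} (hx : pnorm q x = 1) :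
    pnorm 1 ((svdEquiv O U l fun j => (hpos j).ne').symm x) ≤
      (l i)⁻¹ * (√n * normIdLqL2 q n) := by
  have hinv : ∀ j, |l⁻¹ j| ≤ (l i)⁻¹ := fun j => by
    rw [Pi.inv_apply, abs_of_pos (inv_pos.2 (hpos j))]
    exact inv_anti₀ (hpos i) (hmin j)
  calc pnorm 1 (U.symm (diagMap n l⁻¹ (O.symm x)))
      ≤ √n * ‖U.symm (diagMap n l⁻¹ (O.symm x))‖ := pnorm_one_le_sqrt_mul_norm _
    _ = √n * ‖diagMap n l⁻¹ (O.symm x)‖ := by rw [LinearIsometryEquiv.norm_map]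
    _ ≤ √n * ((l i)⁻¹ * ‖O.symm x‖) := by
        gcongr
        exact norm_diagMap_le (inv_nonneg.2 (hpos i).le) hinv _
    _ = √n * ((l i)⁻¹ * ‖x‖) := by rw [LinearIsometryEquiv.norm_map]
    _ ≤ √n * ((l i)⁻¹ * normIdLqL2 q n) := by
        gcongr
        exacts [(inv_pos.2 (hpos i)).le, norm_le_normIdLqL2 hq hx]
    _ = (l i)⁻¹ * (√n * normIdLqL2 q n) := by ring

theorem GammaT_svd_le (hq : 1 ≤ q) (hpos : ∀ j, 0 < l j) {i : Fin n} (hmin : ∀ j, l i ≤ l j) :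
    GammaT q n (⇑O ∘ ⇑(diagMap n l) ∘ ⇑U) ≤ (l i)⁻¹ * (√n * normIdLqL2 q n) :=
  GammaT_le (T := svdEquiv O U l fun j => (hpos j).ne')
    (mul_nonneg (inv_pos.2 (hpos i)).le (mul_nonneg (Real.sqrt_nonneg _) (normIdLqL2_nonneg q n)))
    fun _ hx => pnorm_one_svdEquiv_symm_le O U hq hpos hmin hx

theorem exists_GammaT_svd_eq (hq : 1 ≤ q) (hpos : ∀ j, 0 < l j) {i : Fin n}
    (hmin : ∀ j, l i ≤ l j) : ∃ O U : EuclideanSpace ℝ (Fin n) ≃ₗᵢ[ℝ] EuclideanSpace ℝ (Fin n),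
    GammaT q n (⇑O ∘ ⇑(diagMap n l) ∘ ⇑U) = (l i)⁻¹ * (√n * normIdLqL2 q n) := by
  have hsqrt : 0 < √n := Real.sqrt_pos.2 (Nat.cast_pos.2 i.pos)
  obtain ⟨x₀, hx₀, hnorm⟩ := exists_pnorm_eq_one_norm_eq i.pos hq
  set c := normIdLqL2 q n
  set e := EuclideanSpace.single i (1 : ℝ)
  set v : EuclideanSpace ℝ (Fin n) := WithLp.toLp 2 fun _ => (√n)⁻¹
  obtain ⟨O, hO⟩ := exists_linearIsometryEquiv_apply_eq (v := c • e) (w := x₀) (by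
    rw [norm_smul, PiLp.norm_single, hnorm]
    simpa using normIdLqL2_nonneg q n)
  obtain ⟨U, hU⟩ := exists_linearIsometryEquiv_apply_eq (v := v) (w := e) (by
    rw [norm_toLp_const, PiLp.norm_single, abs_of_pos (inv_pos.2 hsqrt),
      mul_inv_cancel₀ hsqrt.ne', norm_one])
  refine ⟨O, U, GammaT_eq (T := svdEquiv O U l fun j => (hpos j).ne')
    (fun _ hx => pnorm_one_svdEquiv_symm_le O U hq hpos hmin hx) hx₀ ?_⟩
  have hD : diagMap n l⁻¹ (c • e) = ((l i)⁻¹ * c) • e := by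
    ext j
    by_cases hj : j = i <;> simp [e, hj]
    ring
  rw [svdEquiv_symm_apply, ← hO, O.symm_apply_apply, hD, map_smul, ← hU, U.symm_apply_apply,
    pnorm_one_smul, pnorm_one_toLp_const, abs_of_pos (inv_pos.2 hsqrt), ← div_eq_mul_inv,
    Real.div_sqrt, abs_of_nonneg (mul_nonneg (inv_pos.2 (hpos i)).le (normIdLqL2_nonneg q n))]
  ring

end Gamma

/-- For nonincreasing singular values `λ_1 ≥ … ≥ λ_n > 0`, the supremum of
`Γ(O·D·U)` over all orthogonal `O, U` (i.e., over all invertible `T` with singular values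
`(λ_i)`) equals `λ_n^{-1}·n^{1-1/q}` if `q ≥ 2` and `λ_n^{-1}·n^{1/2}` if `1 ≤ q < 2`. -/
theorem stmt17 (n : ℕ) (hn : 0 < n) (l : Fin n → ℝ)
    (hdec : ∀ i j : Fin n, i ≤ j → l j ≤ l i) (hpos : ∀ i, 0 < l i)
    (q : ℝ≥0∞) (hq : 1 ≤ q) :
    sSup {g : ℝ | ∃ O U : EuclideanSpace ℝ (Fin n) ≃ₗᵢ[ℝ] EuclideanSpace ℝ (Fin n),
        g = GammaT q n (⇑O ∘ ⇑(diagMap n l) ∘ ⇑U)} =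
      (l ⟨n - 1, by omega⟩)⁻¹ *
        (if 2 ≤ q then (n : ℝ) ^ (1 - q.toReal⁻¹) else Real.sqrt n) := by
  set i₀ : Fin n := ⟨n - 1, by omega⟩
  have hmin : ∀ j, l i₀ ≤ l j := fun j => hdec j i₀ (Fin.le_def.2 (by simp [i₀]; omega))
  rw [← sqrt_mul_normIdLqL2]
  obtain ⟨O, U, hOU⟩ := exists_GammaT_svd_eq hq hpos hmin
  exact IsGreatest.csSup_eq ⟨⟨O, U, hOU.symm⟩,
    by rintro _ ⟨O, U, rfl⟩; exact GammaT_svd_le O U hq hpos hmin⟩
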